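/- arXiv:1609.09141 — 2 statements merged into one kernel-verified Lean document; each statement's English description precedes it below -/
import Mathlib

section
/- Let D be a random variable with density ψ on ℝ that is 'softly unimodal': for each ε ≥ 0 there exists ŵ(ε) ∈ [-∞, ∞) such that {w : ψ(w+ε) ≤ ψ(w)} = [ŵ(ε), ∞). Then for any ε ≥ 0, the supremum over Borel sets C ⊆ ℝ of |∫_C ψ(w) dw − ∫_C ψ(w+ε) dw| equals P(ŵ(ε) ≤ D ≤ ŵ(ε)+ε). -/
open MeasureTheory

/-- For a softly unimodal density ψ of a random variable D, and ε ≥ 0 with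
witness ŵ(ε), the supremum over Borel sets C of |∫_C ψ(w)dw − ∫_C ψ(w+ε)dw| equals
P(ŵ ≤ D ≤ ŵ + ε). -/
theorem sup_total_variation_shift_eq
    {Ω : Type*} {m0 : MeasurableSpace Ω} (μ : Measure Ω) [IsProbabilityMeasure μ]
    (ψ : ℝ → ℝ) (hψ0 : ∀ w, 0 ≤ ψ w) (hψm : Measurable ψ)
    (hψ1 : ∫ w, ψ w = 1) (hψint : Integrable ψ)
    (D : Ω → ℝ) (hD : Measurable D)
    (hdens : ∀ A : Set ℝ, MeasurableSet A → (μ (D ⁻¹' A)).toReal = ∫ w in A, ψ w)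
    (hsoft : ∀ ε : ℝ, 0 ≤ ε →
      (∃ w0 : ℝ, {w : ℝ | ψ (w + ε) ≤ ψ w} = Set.Ici w0) ∨
      {w : ℝ | ψ (w + ε) ≤ ψ w} = Set.univ)
    (ε : ℝ) (hε : 0 ≤ ε) (w0 : ℝ)
    (hw0 : {w : ℝ | ψ (w + ε) ≤ ψ w} = Set.Ici w0) :
    (⨆ C : {C : Set ℝ // MeasurableSet C},
        |(∫ w in C.1, ψ w) - ∫ w in C.1, ψ (w + ε)|)
      = (μ {ω | D ω ∈ Set.Icc w0 (w0 + ε)}).toReal := by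
  set g : ℝ → ℝ := fun w => ψ (w + ε) with hg_def
  have hg_int : Integrable g :=
    ((measurePreserving_add_right volume ε).integrable_comp_emb
      (measurableEmbedding_addRight ε)).mpr hψint
  set h : ℝ → ℝ := fun w => ψ w - g w with hh_def
  have hh_int : Integrable h := hψint.sub hg_int
  have hsign : ∀ w, w0 ≤ w → 0 ≤ h w := by
    intro w hw
    have : w ∈ {w : ℝ | ψ (w + ε) ≤ ψ w} := by rw [hw0]; exact hw
    simpa [h, g, sub_nonneg] using this
  have hsign' : ∀ w, w < w0 → h w ≤ 0 := by
    intro w hw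
    have : w ∉ {w : ℝ | ψ (w + ε) ≤ ψ w} := by rw [hw0]; exact not_le.mpr hw
    simp only [Set.mem_setOf_eq, not_le] at this
    simp only [h, g, sub_nonpos]
    exact this.le
  set M : ℝ := ∫ w in Set.Ici w0, h w with hM_def
  -- M equals ∫_{Icc w0 (w0+ε)} ψ
  have hshift : ∫ w in Set.Ici w0, g w = ∫ w in Set.Ici (w0 + ε), ψ w := by
    have := (measurePreserving_add_right volume ε).setIntegral_preimage_emb
      (measurableEmbedding_addRight ε) ψ (Set.Ici (w0 + ε))
    simpa [g] using this
  have hIci_decomp : ∫ w in Set.Ici w0, ψ w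
      = (∫ w in Set.Ico w0 (w0 + ε), ψ w) + ∫ w in Set.Ici (w0 + ε), ψ w := by
    rw [← setIntegral_union ((Set.Iio_disjoint_Ici le_rfl).mono_left Set.Ico_subset_Iio_self)
      measurableSet_Ici hψint.integrableOn hψint.integrableOn,
      Set.Ico_union_Ici_eq_Ici (le_add_of_nonneg_right hε)]
  have hM_eq : M = ∫ w in Set.Icc w0 (w0 + ε), ψ w := by
    have hIco : ∫ w in Set.Ico w0 (w0 + ε), ψ w = ∫ w in Set.Icc w0 (w0 + ε), ψ w :=
      setIntegral_congr_set Ico_ae_eq_Icc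
    rw [hM_def, integral_sub hψint.integrableOn hg_int.integrableOn, hshift, hIci_decomp]
    linarith
  have hM_nonneg : 0 ≤ M :=
    hM_eq ▸ setIntegral_nonneg measurableSet_Icc fun w _ => hψ0 w
  -- ∫ over Iio w0 of h equals -M
  have hInt_total : ∫ w, h w = 0 := by
    rw [integral_sub hψint hg_int, hψ1]
    have : ∫ w, g w = ∫ w, ψ w :=
      (measurePreserving_add_right volume ε).integral_comp (measurableEmbedding_addRight ε) ψ
    rw [this, hψ1]; ring
  have hIio : ∫ w in Set.Iio w0, h w = -M := by
    have hu : (∫ w in Set.Iio w0, h w) + ∫ w in Set.Ici w0, h w = ∫ w, h w := by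
      rw [← setIntegral_union (Set.Iio_disjoint_Ici le_rfl) measurableSet_Ici
        hh_int.integrableOn hh_int.integrableOn, Set.Iio_union_Ici, setIntegral_univ]
    have := hu.trans hInt_total
    linarith [this]
  -- nonneg a.e. on Ici, nonpos facts
  have h_ae_Ici : 0 ≤ᵐ[volume.restrict (Set.Ici w0)] h :=
    (ae_restrict_iff' measurableSet_Ici).mpr (Filter.Eventually.of_forall fun w hw => hsign w hw)
  have hneg_ae_Iio : 0 ≤ᵐ[volume.restrict (Set.Iio w0)] (-h) :=
    (ae_restrict_iff' measurableSet_Iio).mpr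
      (Filter.Eventually.of_forall fun w hw => by simpa using hsign' w hw)
  -- the key per-set bound
  have hbound : ∀ C : Set ℝ, MeasurableSet C →
      |(∫ w in C, ψ w) - ∫ w in C, g w| ≤ M := by
    intro C hC
    have hsplit : ∫ w in C, h w
        = (∫ w in C ∩ Set.Iio w0, h w) + ∫ w in C ∩ Set.Ici w0, h w := by
      rw [← setIntegral_union
        ((Set.Iio_disjoint_Ici le_rfl).mono Set.inter_subset_right Set.inter_subset_right)
        (hC.inter measurableSet_Ici) hh_int.integrableOn hh_int.integrableOn,
        ← Set.inter_union_distrib_left, Set.Iio_union_Ici, Set.inter_univ]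
    have hCh : (∫ w in C, ψ w) - ∫ w in C, g w = ∫ w in C, h w :=
      (integral_sub hψint.integrableOn hg_int.integrableOn).symm
    rw [hCh, abs_le]
    constructor
    · -- lower bound: ∫_C h ≥ -M
      have h1 : 0 ≤ ∫ w in C ∩ Set.Ici w0, h w :=
        setIntegral_nonneg (hC.inter measurableSet_Ici) fun w hw => hsign w hw.2
      have h2 : ∫ w in Set.Iio w0, h w ≤ ∫ w in C ∩ Set.Iio w0, h w := by
        have hsub : C ∩ Set.Iio w0 ⊆ Set.Iio w0 := Set.inter_subset_right
        have := setIntegral_mono_set hh_int.neg.integrableOn hneg_ae_Iio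
          (HasSubset.Subset.eventuallyLE hsub)
        simp only [Pi.neg_apply, integral_neg] at this
        linarith
      rw [hsplit]; rw [hIio] at h2; linarith
    · -- upper bound: ∫_C h ≤ M
      have hsub : C ∩ Set.Ici w0 ⊆ Set.Ici w0 := Set.inter_subset_right
      have h1 : ∫ w in C ∩ Set.Ici w0, h w ≤ ∫ w in Set.Ici w0, h w :=
        setIntegral_mono_set hh_int.integrableOn h_ae_Ici
          (HasSubset.Subset.eventuallyLE hsub)
      have h2 : ∫ w in C ∩ Set.Iio w0, h w ≤ 0 :=
        setIntegral_nonpos (hC.inter measurableSet_Iio) fun w hw => hsign' w hw.2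
      rw [hsplit]; linarith
  have hach : |(∫ w in Set.Ici w0, ψ w) - ∫ w in Set.Ici w0, g w| = M := by
    rw [← integral_sub hψint.integrableOn hg_int.integrableOn]
    exact abs_of_nonneg hM_nonneg
  have hsup : (⨆ C : {C : Set ℝ // MeasurableSet C},
      |(∫ w in C.1, ψ w) - ∫ w in C.1, ψ (w + ε)|) = M := by
    apply le_antisymm
    · exact ciSup_le fun C => hbound C.1 C.2
    · have hb : BddAbove (Set.range fun C : {C : Set ℝ // MeasurableSet C} =>
          |(∫ w in C.1, ψ w) - ∫ w in C.1, ψ (w + ε)|) :=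
        ⟨M, by rintro x ⟨C, rfl⟩; exact hbound C.1 C.2⟩
      have := le_ciSup hb (⟨Set.Ici w0, measurableSet_Ici⟩ : {C : Set ℝ // MeasurableSet C})
      simpa [show |(∫ w in Set.Ici w0, ψ w) - ∫ w in Set.Ici w0, ψ (w + ε)| = M from hach] using this
  rw [hsup]
  have : {ω | D ω ∈ Set.Icc w0 (w0 + ε)} = D ⁻¹' Set.Icc w0 (w0 + ε) := rfl
  rw [this, hdens _ measurableSet_Icc, hM_eq]
end

section
/- Let D be a random variable with density ψ and let γ : X → ℝ be a function on a set X ⊆ ℝ. Define, for each x ∈ X, the probability measure K(x, A) = P(γ(x) − D ∈ A) on Borel sets A. Then for any x, x' ∈ X with ε = |γ(x') − γ(x)|, one has sup over Borel A of |K(x',A) − K(x,A)| ≤ sup over Borel C of |∫_C ψ(w)dw − ∫_C ψ(w+ε)dw|; and if ψ is softly unimodal with witness ŵ = ŵ(ε), this is at most P(ŵ ≤ D ≤ ŵ + ε). -/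
open MeasureTheory

/-- Auxiliary: shifted set integral. -/
lemma shift_setIntegral (ε : ℝ) (ψ : ℝ → ℝ) (s : Set ℝ) :
    ∫ w in (fun w => w + ε) ⁻¹' s, ψ (w + ε) = ∫ w in s, ψ w :=
  (measurePreserving_add_right volume ε).setIntegral_preimage_emb
    (measurableEmbedding_addRight ε) ψ s

/-- Key bound: for any measurable set `C`, the difference between the integral of `ψ`
and that of its shift over `C` is bounded by the mass of `ψ` on `[w0, w0 + ε]`. -/
lemma key_bound (ψ : ℝ → ℝ) (hψ0 : ∀ w, 0 ≤ ψ w) (hint : Integrable ψ)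
    (ε : ℝ) (hε0 : 0 ≤ ε) (w0 : ℝ)
    (hw0 : {w : ℝ | ψ (w + ε) ≤ ψ w} = Set.Ici w0)
    (C : Set ℝ) (hC : MeasurableSet C) :
    |(∫ w in C, ψ w) - ∫ w in C, ψ (w + ε)| ≤ ∫ w in Set.Icc w0 (w0 + ε), ψ w := by
  have hint' : Integrable (fun w => ψ (w + ε)) := hint.comp_add_right ε
  set g : ℝ → ℝ := fun w => ψ w - ψ (w + ε) with hg_def
  have hg : Integrable g := hint.sub hint'
  have hgtot : ∫ w, g w = 0 := by
    rw [integral_sub hint hint', integral_add_right_eq_self ψ ε, sub_self]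
  -- g is nonneg on Ici w0, nonpos outside
  have hg_nonneg : ∀ w ∈ Set.Ici w0, 0 ≤ g w := by
    intro w hw
    rw [← hw0] at hw
    exact sub_nonneg.mpr hw
  have hg_nonpos : ∀ w ∉ Set.Ici w0, g w ≤ 0 := by
    intro w hw
    rw [← hw0] at hw
    have : ψ w ≤ ψ (w + ε) := le_of_not_ge hw
    simpa [hg_def] using sub_nonpos.mpr this
  -- ∫ over any measurable set ≤ ∫ over Ici w0
  have hmain : ∀ S : Set ℝ, MeasurableSet S → ∫ w in S, g w ≤ ∫ w in Set.Ici w0, g w := by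
    intro S hS
    have h1 : ∫ w in S, g w ≤ ∫ w in S ∩ Set.Ici w0, g w := by
      have hsplit : ∫ w in S, g w =
          (∫ w in S ∩ Set.Ici w0, g w) + ∫ w in S \ Set.Ici w0, g w := by
        rw [← setIntegral_union (Set.disjoint_left.mpr fun a ha hb => hb.2 ha.2)
            (hS.diff measurableSet_Ici) (hg.integrableOn) (hg.integrableOn),
          Set.inter_union_diff]
      have hneg : ∫ w in S \ Set.Ici w0, g w ≤ 0 :=
        setIntegral_nonpos (hS.diff measurableSet_Ici) fun w hw => hg_nonpos w hw.2
      linarith [hsplit, hneg]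
    have h2 : ∫ w in S ∩ Set.Ici w0, g w ≤ ∫ w in Set.Ici w0, g w := by
      apply setIntegral_mono_set hg.integrableOn
      · filter_upwards [ae_restrict_mem measurableSet_Ici] with w hw
        exact hg_nonneg w hw
      · exact Filter.Eventually.of_forall fun w hw => hw.2
    exact h1.trans h2
  -- value of ∫ over Ici w0
  have hIci : ∫ w in Set.Ici w0, g w = ∫ w in Set.Ico w0 (w0 + ε), ψ w := by
    have hshift : ∫ w in Set.Ici w0, ψ (w + ε) = ∫ w in Set.Ici (w0 + ε), ψ w := by
      have hpre : (fun w => w + ε) ⁻¹' Set.Ici (w0 + ε) = Set.Ici w0 := by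
        ext w; simp [Set.mem_Ici]
      rw [← hpre]; exact shift_setIntegral ε ψ _
    have hsplit : ∫ w in Set.Ici w0, ψ w =
        (∫ w in Set.Ico w0 (w0 + ε), ψ w) + ∫ w in Set.Ici (w0 + ε), ψ w := by
      rw [← setIntegral_union ((Set.Iio_disjoint_Ici le_rfl).mono_left
            Set.Ico_subset_Iio_self) measurableSet_Ici
          hint.integrableOn hint.integrableOn,
        Set.Ico_union_Ici_eq_Ici (le_add_of_nonneg_right hε0)]
    rw [hg_def]
    rw [integral_sub hint.integrableOn hint'.integrableOn, hshift]
    linarith [hsplit]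
  have hIco_le : ∫ w in Set.Ico w0 (w0 + ε), ψ w ≤ ∫ w in Set.Icc w0 (w0 + ε), ψ w := by
    apply setIntegral_mono_set hint.integrableOn
    · exact Filter.Eventually.of_forall fun w => hψ0 w
    · exact Filter.Eventually.of_forall fun w hw => Set.Ico_subset_Icc_self hw
  have hdiff : (∫ w in C, ψ w) - ∫ w in C, ψ (w + ε) = ∫ w in C, g w := by
    rw [hg_def, integral_sub hint.integrableOn hint'.integrableOn]
  rw [hdiff, abs_le]
  constructor
  · -- lower bound: ∫_C g = -∫_{Cᶜ} g ≥ -∫_{Ici} g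
    have hc := hmain Cᶜ hC.compl
    have hsum : (∫ w in C, g w) + ∫ w in Cᶜ, g w = 0 := by
      rw [integral_add_compl hC hg, hgtot]
    have := hIci ▸ hc
    linarith [hIco_le]
  · exact (hmain C hC).trans (le_of_le_of_eq (le_of_eq hIci) rfl |>.trans hIco_le)

/-- for the kernel K(x,A) = P(γ(x) − D ∈ A) driven by a random variable D
with density ψ, and x, x' ∈ X with ε = |γ(x') − γ(x)|, the total-variation-type distance
sup_A |K(x',A) − K(x,A)| is at most sup_C |∫_C ψ − ∫_C ψ(·+ε)|; and if ψ is softly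
unimodal with witness ŵ = ŵ(ε), it is at most P(ŵ ≤ D ≤ ŵ + ε). -/
theorem kernel_tv_le_density_shift
    {Ω : Type*} {m0 : MeasurableSpace Ω} (μ : Measure Ω) [IsProbabilityMeasure μ]
    (ψ : ℝ → ℝ) (hψ0 : ∀ w, 0 ≤ ψ w) (hψm : Measurable ψ) (hψ1 : ∫ w, ψ w = 1)
    (D : Ω → ℝ) (hD : Measurable D)
    (hdens : ∀ A : Set ℝ, MeasurableSet A → (μ (D ⁻¹' A)).toReal = ∫ w in A, ψ w)
    (X : Set ℝ) (γ : ℝ → ℝ) (x x' : ℝ) (hx : x ∈ X) (hx' : x' ∈ X)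
    (ε : ℝ) (hε : ε = |γ x' - γ x|)
    (w0 : ℝ) (hw0 : {w : ℝ | ψ (w + ε) ≤ ψ w} = Set.Ici w0) :
    (⨆ A : {A : Set ℝ // MeasurableSet A},
        |(μ {ω | γ x' - D ω ∈ A.1}).toReal - (μ {ω | γ x - D ω ∈ A.1}).toReal|)
      ≤ (⨆ C : {C : Set ℝ // MeasurableSet C},
          |(∫ w in C.1, ψ w) - ∫ w in C.1, ψ (w + ε)|) ∧
    (⨆ A : {A : Set ℝ // MeasurableSet A},
        |(μ {ω | γ x' - D ω ∈ A.1}).toReal - (μ {ω | γ x - D ω ∈ A.1}).toReal|)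
      ≤ (μ {ω | D ω ∈ Set.Icc w0 (w0 + ε)}).toReal := by
  have hε0 : 0 ≤ ε := hε ▸ abs_nonneg _
  have hint : Integrable ψ := integrable_of_integral_eq_one hψ1
  -- mass of the Icc
  have hIcc : (μ {ω | D ω ∈ Set.Icc w0 (w0 + ε)}).toReal
      = ∫ w in Set.Icc w0 (w0 + ε), ψ w := hdens _ measurableSet_Icc
  -- key: every kernel difference equals a density-shift difference over some measurable set
  have hrepr : ∀ A : Set ℝ, MeasurableSet A → ∃ C : Set ℝ, MeasurableSet C ∧
      |(μ {ω | γ x' - D ω ∈ A}).toReal - (μ {ω | γ x - D ω ∈ A}).toReal|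
        = |(∫ w in C, ψ w) - ∫ w in C, ψ (w + ε)| := by
    intro A hA
    set B : Set ℝ := {w : ℝ | γ x - w ∈ A} with hB_def
    set B' : Set ℝ := {w : ℝ | γ x' - w ∈ A} with hB'_def
    have hBm : MeasurableSet B := (measurable_const.sub measurable_id) hA
    have hB'm : MeasurableSet B' := (measurable_const.sub measurable_id) hA
    have hK : (μ {ω | γ x - D ω ∈ A}).toReal = ∫ w in B, ψ w := by
      have : {ω | γ x - D ω ∈ A} = D ⁻¹' B := rfl
      rw [this, hdens B hBm]
    have hK' : (μ {ω | γ x' - D ω ∈ A}).toReal = ∫ w in B', ψ w := by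
      have : {ω | γ x' - D ω ∈ A} = D ⁻¹' B' := rfl
      rw [this, hdens B' hB'm]
    rcases le_total (γ x) (γ x') with hle | hle
    · -- δ = γ x' - γ x ≥ 0, so ε = δ and B' = (· + ε) shifted
      have hεδ : ε = γ x' - γ x := by rw [hε, abs_of_nonneg (by linarith)]
      refine ⟨B, hBm, ?_⟩
      have hpre : (fun w => w + ε) ⁻¹' B' = B := by
        ext w
        simp only [Set.mem_preimage, hB'_def, hB_def, Set.mem_setOf_eq, hεδ]
        have h2 : γ x' - (w + (γ x' - γ x)) = γ x - w := by ring
        rw [h2]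
      have hshift : ∫ w in B, ψ (w + ε) = ∫ w in B', ψ w := by
        rw [← hpre]; exact shift_setIntegral ε ψ B'
      rw [hK, hK', hshift, abs_sub_comm]
    · -- δ ≤ 0, ε = -δ and B = B' shifted
      have hεδ : ε = γ x - γ x' := by rw [hε, abs_of_nonpos (by linarith)]; ring
      refine ⟨B', hB'm, ?_⟩
      have hpre : (fun w => w + ε) ⁻¹' B = B' := by
        ext w
        simp only [Set.mem_preimage, hB'_def, hB_def, Set.mem_setOf_eq, hεδ]
        have h2 : γ x - (w + (γ x - γ x')) = γ x' - w := by ring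
        rw [h2]
      have hshift : ∫ w in B', ψ (w + ε) = ∫ w in B, ψ w := by
        rw [← hpre]; exact shift_setIntegral ε ψ B
      rw [hK, hK', hshift]
  -- uniform bound on kernel differences
  have hbound : ∀ A : {A : Set ℝ // MeasurableSet A},
      |(μ {ω | γ x' - D ω ∈ A.1}).toReal - (μ {ω | γ x - D ω ∈ A.1}).toReal|
        ≤ ∫ w in Set.Icc w0 (w0 + ε), ψ w := by
    intro A
    obtain ⟨C, hC, hCeq⟩ := hrepr A.1 A.2
    rw [hCeq]
    exact key_bound ψ hψ0 hint ε hε0 w0 hw0 C hC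
  have hbddC : BddAbove (Set.range fun C : {C : Set ℝ // MeasurableSet C} =>
      |(∫ w in C.1, ψ w) - ∫ w in C.1, ψ (w + ε)|) := by
    refine ⟨∫ w in Set.Icc w0 (w0 + ε), ψ w, ?_⟩
    rintro y ⟨C, rfl⟩
    exact key_bound ψ hψ0 hint ε hε0 w0 hw0 C.1 C.2
  constructor
  · apply ciSup_le
    intro A
    obtain ⟨C, hC, hCeq⟩ := hrepr A.1 A.2
    rw [hCeq]
    exact le_ciSup hbddC ⟨C, hC⟩
  · rw [hIcc]
    exact ciSup_le hbound
end
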